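/- Kernel of the Wedderburn polynomial operator: let K be a division ring with endomorphism S and S-derivation D, a ∈ K, and let u₁,…,uₙ ∈ K be right linearly independent over the (S,D)-centralizer C(a). Let pₙ = [t − a^{uᵢ} : 1 ≤ i ≤ n]ₗ. Then ker(pₙ(Tₐ)) = u₁C(a) + ⋯ + uₙC(a), an n-dimensional right C(a)-subspace of K. -/

import Mathlib

/-- The `(S,D)`-conjugate `a^c := S(c)·a·c⁻¹ + D(c)·c⁻¹`. -/
def sdConj {K : Type*} [DivisionRing K] (S : K →+* K) (D : K →+ K) (a c : K) : K :=
  S c * a * c⁻¹ + D c * c⁻¹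

/-- `R` together with `ι : K →+* R` and `t : R` is the skew polynomial ring `K[t;S,D]`:
the commutation rule `t·a = S(a)t + D(a)` holds and every element of `R` is uniquely a
polynomial `Σ ι(cᵢ)·tⁱ`. -/
def IsSkewPolyRing {K R : Type*} [DivisionRing K] [Ring R] (S : K →+* K) (D : K →+ K)
    (ι : K →+* R) (t : R) : Prop :=
  (∀ a : K, t * ι a = ι (S a) * t + ι (D a)) ∧
  (∀ r : R, ∃! c : ℕ →₀ K, r = c.sum fun i k => ι k * t ^ i)

/-- The coefficients of `r ∈ K[t;S,D]`. -/
noncomputable def coeffs {K R : Type*} [DivisionRing K] [Ring R] {S : K →+* K} {D : K →+ K}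
    {ι : K →+* R} {t : R} (h : IsSkewPolyRing S D ι t) (r : R) : ℕ →₀ K :=
  (h.2 r).choose

/-- The degree of `r ∈ K[t;S,D]` (with `deg 0 = 0`). -/
noncomputable def sdeg {K R : Type*} [DivisionRing K] [Ring R] {S : K →+* K} {D : K →+ K}
    {ι : K →+* R} {t : R} (h : IsSkewPolyRing S D ι t) (r : R) : ℕ :=
  (coeffs h r).support.sup id

/-- `r ∈ K[t;S,D]` is monic: its leading coefficient is `1`. -/
noncomputable def SMonic {K R : Type*} [DivisionRing K] [Ring R] {S : K →+* K} {D : K →+ K}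
    {ι : K →+* R} {t : R} (h : IsSkewPolyRing S D ι t) (r : R) : Prop :=
  coeffs h r (sdeg h r) = 1

/-- The `(S,D)`-centralizer of `a`. -/
def sdCentralizer {K : Type*} [DivisionRing K] (S : K →+* K) (D : K →+ K) (a : K) : Set K :=
  {x | x = 0 ∨ S x * a * x⁻¹ + D x * x⁻¹ = a}

/-- The pseudo-linear map `Tₐ(x) = S(x)a + D(x)`. -/
def sdT {K : Type*} [DivisionRing K] (S : K →+* K) (D : K →+ K) (a x : K) : K :=
  S x * a + D x

/-!
Evaluation `r ↦ r(Tₐ)` turns products into composites, and `Tₐ(w) = a^w·w`; so for `w ≠ 0` the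
left ideal `R(t − a^w)` is exactly the annihilator of `w`. Hence `p(Tₐ)` kills every `uᵢ`, and,
being right `C(a)`-linear, their span. Conversely `ker f(Tₐ)` has right `C(a)`-dimension at most
`deg f`, while `deg p ≤ n` because a product of `n` linear factors kills all `uᵢ` and therefore
lies in `Rp`. So `v, u₁, …, uₙ` are dependent, and independence of the `uᵢ` puts `v` in their span.
The centralizer facts all come from the conjugation rule `a^(xy) = (a^y)^x`.
-/

def IsSDerivation {K : Type*} [DivisionRing K] (S : K →+* K) (D : K →+ K) : Prop :=
  ∀ a b : K, D (a * b) = S a * D b + D a * b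

/-- Right linear independence over `C(a)`. -/
def SDIndependent {K : Type*} [DivisionRing K] (S : K →+* K) (D : K →+ K) (a : K) {n : ℕ}
    (u : Fin n → K) : Prop :=
  ∀ c : Fin n → K, (∀ i, c i ∈ sdCentralizer S D a) → ∑ i, u i * c i = 0 → ∀ i, c i = 0

section Conjugation

variable {K : Type*} [DivisionRing K] {S : K →+* K} {D : K →+ K}

lemma IsSDerivation.map_one (hD : IsSDerivation S D) : D 1 = 0 := by
  have h := hD 1 1
  rw [mul_one, S.map_one, one_mul, mul_one] at h
  exact left_eq_add.mp h

lemma sdConj_one (hD : IsSDerivation S D) (a : K) : sdConj S D a 1 = a := by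
  simp [sdConj, hD.map_one]

lemma sdConj_neg (a x : K) : sdConj S D a (-x) = sdConj S D a x := by
  simp [sdConj, inv_neg]

lemma sdConj_mul (hD : IsSDerivation S D) (a x : K) {y : K} (hy : y ≠ 0) :
    sdConj S D a (x * y) = sdConj S D (sdConj S D a y) x := by
  simp only [sdConj, map_mul, hD x y, mul_inv_rev, add_mul, mul_add, mul_assoc,
    mul_inv_cancel_left₀ hy, add_assoc]

lemma sdConj_mul_self (a : K) {w : K} (hw : w ≠ 0) : sdConj S D a w * w = sdT S D a w := by
  rw [sdConj, sdT, add_mul, inv_mul_cancel_right₀ hw, inv_mul_cancel_right₀ hw]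

lemma mem_sdCentralizer_iff {a c : K} :
    c ∈ sdCentralizer S D a ↔ c = 0 ∨ sdConj S D a c = a := Iff.rfl

variable (hD : IsSDerivation S D) {a : K}
include hD

lemma one_mem_sdCentralizer : (1 : K) ∈ sdCentralizer S D a :=
  mem_sdCentralizer_iff.mpr <| Or.inr (sdConj_one hD a)

lemma mul_mem_sdCentralizer {c d : K} (hc : c ∈ sdCentralizer S D a)
    (hd : d ∈ sdCentralizer S D a) : c * d ∈ sdCentralizer S D a := by
  rw [mem_sdCentralizer_iff] at *
  rcases hd with rfl | hd
  · exact Or.inl (mul_zero c)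
  rcases hc with rfl | hc
  · exact Or.inl (zero_mul d)
  by_cases hd0 : d = 0
  · exact Or.inl (by rw [hd0, mul_zero])
  exact Or.inr (by rw [sdConj_mul hD a c hd0, hd, hc])

omit hD in
lemma neg_mem_sdCentralizer {c : K} (hc : c ∈ sdCentralizer S D a) :
    -c ∈ sdCentralizer S D a := by
  rw [mem_sdCentralizer_iff] at *
  rcases hc with rfl | hc
  · exact Or.inl neg_zero
  · exact Or.inr (by rw [sdConj_neg, hc])

lemma inv_mem_sdCentralizer {c : K} (hc : c ∈ sdCentralizer S D a) :
    c⁻¹ ∈ sdCentralizer S D a := by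
  by_cases hc0 : c = 0
  · exact mem_sdCentralizer_iff.mpr (Or.inl (by rw [hc0, inv_zero]))
  have hc' : sdConj S D a c = a := hc.resolve_left hc0
  refine mem_sdCentralizer_iff.mpr (Or.inr ?_)
  nth_rw 1 [← hc']
  rw [← sdConj_mul hD a _ hc0, inv_mul_cancel₀ hc0, sdConj_one hD]

lemma sdT_mul_of_mem {c : K} (hc : c ∈ sdCentralizer S D a) (x : K) :
    sdT S D a (x * c) = sdT S D a x * c := by
  by_cases hx : x = 0
  · simp [hx, sdT]
  rcases mem_sdCentralizer_iff.mp hc with rfl | hc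
  · simp [sdT]
  by_cases hc0 : c = 0
  · simp [hc0, sdT]
  rw [← sdConj_mul_self a (mul_ne_zero hx hc0), sdConj_mul hD a x hc0, hc, ← mul_assoc,
    sdConj_mul_self a hx]

lemma exists_mem_sdCentralizer_of_sdT_eq {w z : K} (hw : w ≠ 0)
    (hz : sdT S D a z = sdConj S D a w * z) :
    ∃ e ∈ sdCentralizer S D a, z = w * e := by
  refine ⟨w⁻¹ * z, ?_, by rw [mul_inv_cancel_left₀ hw]⟩
  by_cases hz0 : z = 0
  · exact mem_sdCentralizer_iff.mpr (Or.inl (by rw [hz0, mul_zero]))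
  have hconj : sdConj S D a z = sdConj S D a w :=
    mul_right_cancel₀ hz0 (by rw [sdConj_mul_self a hz0, hz])
  refine mem_sdCentralizer_iff.mpr (Or.inr ?_)
  rw [sdConj_mul hD a _ hz0, hconj, ← sdConj_mul hD a _ hw, inv_mul_cancel₀ hw, sdConj_one hD]

lemma SDIndependent.exists_eq_sum_of_cons_dependence {n : ℕ} {u : Fin n → K}
    (hind : SDIndependent S D a u) {v : K} {c : Fin (n + 1) → K}
    (hcC : ∀ i, c i ∈ sdCentralizer S D a)
    (hsum : ∑ i, (Fin.cons v u : Fin (n + 1) → K) i * c i = 0) (hc : c ≠ 0) :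
    ∃ e : Fin n → K, (∀ i, e i ∈ sdCentralizer S D a) ∧ v = ∑ i, u i * e i := by
  rw [Fin.sum_univ_succ] at hsum
  simp only [Fin.cons_zero, Fin.cons_succ] at hsum
  have hc0 : c 0 ≠ 0 := by
    intro hc0
    rw [hc0, mul_zero, zero_add] at hsum
    have htail := hind (fun i => c i.succ) (fun i => hcC _) hsum
    exact hc (funext fun i => Fin.cases hc0 htail i)
  refine ⟨fun i => -(c i.succ * (c 0)⁻¹), fun i => ?_, ?_⟩
  · exact neg_mem_sdCentralizer
      (mul_mem_sdCentralizer hD (hcC _) (inv_mem_sdCentralizer hD (hcC 0)))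
  · calc v = -(∑ i, u i * c i.succ) * (c 0)⁻¹ := by
          rw [← eq_neg_of_add_eq_zero_left hsum, mul_inv_cancel_right₀ hc0]
      _ = ∑ i, u i * -(c i.succ * (c 0)⁻¹) := by
          simp only [neg_mul, Finset.sum_mul, mul_neg, mul_assoc, Finset.sum_neg_distrib]

lemma SDIndependent.ne_zero {n : ℕ} {u : Fin n → K} (hind : SDIndependent S D a u) (i : Fin n) :
    u i ≠ 0 := by
  classical
  intro hui
  have hsingle : ∀ j, (Pi.single i 1 : Fin n → K) j ∈ sdCentralizer S D a := by
    intro j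
    rcases eq_or_ne j i with rfl | hji
    · simpa using one_mem_sdCentralizer hD
    · simpa [hji] using mem_sdCentralizer_iff.mpr (Or.inl rfl)
  simpa using hind _ hsingle (by simp [Pi.single_apply, hui]) i

end Conjugation

section SkewPolynomial

variable {K R : Type*} [DivisionRing K] [Ring R] {S : K →+* K} {D : K →+ K}
  {ι : K →+* R} {t : R}

def ofCoeffs (ι : K →+* R) (t : R) (c : ℕ →₀ K) : R := c.sum fun i k => ι k * t ^ i

lemma ofCoeffs_add (c c' : ℕ →₀ K) :
    ofCoeffs ι t (c + c') = ofCoeffs ι t c + ofCoeffs ι t c' :=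
  Finsupp.sum_add_index' (fun _ => by simp) (fun _ _ _ => by simp [add_mul])

lemma ofCoeffs_single (i : ℕ) (k : K) : ofCoeffs ι t (Finsupp.single i k) = ι k * t ^ i :=
  Finsupp.sum_single_index (by simp)

variable (h : IsSkewPolyRing S D ι t)

lemma ofCoeffs_coeffs (r : R) : ofCoeffs ι t (coeffs h r) = r :=
  (h.2 r).choose_spec.1.symm

lemma coeffs_eq_of_ofCoeffs_eq {r : R} {c : ℕ →₀ K} (hr : ofCoeffs ι t c = r) :
    coeffs h r = c :=
  ((h.2 r).choose_spec.2 c hr.symm).symm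

noncomputable def coeffsAddEquiv : R ≃+ (ℕ →₀ K) where
  toFun := coeffs h
  invFun := ofCoeffs ι t
  left_inv := ofCoeffs_coeffs h
  right_inv _ := coeffs_eq_of_ofCoeffs_eq h rfl
  map_add' r s :=
    coeffs_eq_of_ofCoeffs_eq h (by rw [ofCoeffs_add, ofCoeffs_coeffs, ofCoeffs_coeffs])

lemma coeffs_add (r s : R) : coeffs h (r + s) = coeffs h r + coeffs h s :=
  map_add (coeffsAddEquiv h) r s

lemma coeffs_eq_zero_iff {r : R} : coeffs h r = 0 ↔ r = 0 :=
  (coeffsAddEquiv h).map_eq_zero_iff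

lemma coeffs_monomial (k : K) (i : ℕ) : coeffs h (ι k * t ^ i) = Finsupp.single i k :=
  coeffs_eq_of_ofCoeffs_eq h (ofCoeffs_single i k)

lemma coeffs_iota (k : K) : coeffs h (ι k) = Finsupp.single 0 k := by
  simpa using coeffs_monomial h k 0

lemma coeffs_t_sub_iota (b : K) :
    coeffs h (t - ι b) = Finsupp.single 1 1 + Finsupp.single 0 (-b) := by
  have : t - ι b = ι 1 * t ^ 1 + ι (-b) * t ^ 0 := by simp [sub_eq_add_neg]
  rw [this, coeffs_add, coeffs_monomial, coeffs_monomial]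

lemma coeffs_iota_mul (k : K) (r : R) :
    coeffs h (ι k * r) = Finsupp.mapRange (k * ·) (mul_zero k) (coeffs h r) := by
  refine coeffs_eq_of_ofCoeffs_eq h ?_
  conv_rhs => rw [← ofCoeffs_coeffs h r]
  rw [ofCoeffs, Finsupp.sum_mapRange_index (fun _ => by simp), ofCoeffs, Finsupp.mul_sum]
  simp [mul_assoc]

/-- The commutation rule `t·k = S(k)t + D(k)` on coefficients. -/
lemma coeffs_t_mul (r : R) :
    coeffs h (t * r) = (Finsupp.mapRange S S.map_zero (coeffs h r)).mapDomain (· + 1)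
      + Finsupp.mapRange D D.map_zero (coeffs h r) := by
  refine coeffs_eq_of_ofCoeffs_eq h ?_
  conv_rhs => rw [← ofCoeffs_coeffs h r]
  rw [ofCoeffs_add, ofCoeffs, ofCoeffs, ofCoeffs, Finsupp.mul_sum,
    Finsupp.sum_mapDomain_index (fun _ => by simp) (fun _ _ _ => by simp [add_mul]),
    Finsupp.sum_mapRange_index (fun _ => by simp), Finsupp.sum_mapRange_index (fun _ => by simp),
    ← Finsupp.sum_add]
  refine Finsupp.sum_congr fun i _ => ?_
  rw [← mul_assoc, h.1, add_mul, mul_assoc, ← pow_succ']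

lemma coeffs_t_mul_apply_succ (r : R) (j : ℕ) :
    coeffs h (t * r) (j + 1) = S (coeffs h r j) + D (coeffs h r (j + 1)) := by
  rw [coeffs_t_mul, Finsupp.add_apply, Finsupp.mapRange_apply,
    Finsupp.mapDomain_apply (add_left_injective 1), Finsupp.mapRange_apply]

include h in
lemma induction_monomial {P : R → Prop} (zero : P 0) (add : ∀ r s, P r → P s → P (r + s))
    (monomial : ∀ (k : K) (i : ℕ), P (ι k * t ^ i)) (r : R) : P r := by
  rw [← ofCoeffs_coeffs h r]
  induction coeffs h r using Finsupp.induction_linear with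
  | zero => simpa [ofCoeffs] using zero
  | add c c' hc hc' => rw [ofCoeffs_add]; exact add _ _ hc hc'
  | single i k => rw [ofCoeffs_single]; exact monomial k i

end SkewPolynomial

section Degree

variable {K R : Type*} [DivisionRing K] [Ring R] {S : K →+* K} {D : K →+ K}
  {ι : K →+* R} {t : R} (h : IsSkewPolyRing S D ι t)

lemma le_sdeg_of_mem_support {r : R} {j : ℕ} (hj : j ∈ (coeffs h r).support) : j ≤ sdeg h r :=
  Finset.le_sup (f := id) hj

lemma coeffs_eq_zero_of_sdeg_lt {r : R} {j : ℕ} (hj : sdeg h r < j) : coeffs h r j = 0 :=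
  Finsupp.notMem_support_iff.mp fun hmem => (le_sdeg_of_mem_support h hmem).not_gt hj

lemma coeffs_sdeg_ne_zero {r : R} (hr : r ≠ 0) : coeffs h r (sdeg h r) ≠ 0 := by
  obtain ⟨b, hb, hsup⟩ := Finset.exists_mem_eq_sup (coeffs h r).support
    (Finsupp.support_nonempty_iff.mpr ((coeffs_eq_zero_iff h).not.mpr hr)) id
  rw [sdeg, hsup, id]
  exact Finsupp.mem_support_iff.mp hb

lemma sdeg_eq_of_coeffs_ne_zero {r : R} {d : ℕ} (hd : coeffs h r d ≠ 0)
    (hlt : ∀ j, d < j → coeffs h r j = 0) : sdeg h r = d :=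
  le_antisymm
    (Finset.sup_le fun j hj => not_lt.mp fun hdj => Finsupp.mem_support_iff.mp hj (hlt j hdj))
    (le_sdeg_of_mem_support h (Finsupp.mem_support_iff.mpr hd))

lemma coeffs_t_pow_mul (s : R) (i : ℕ) :
    (∀ j, i + sdeg h s < j → coeffs h (t ^ i * s) j = 0) ∧
      coeffs h (t ^ i * s) (i + sdeg h s) = (S : K → K)^[i] (coeffs h s (sdeg h s)) := by
  induction i with
  | zero => simpa using fun j => coeffs_eq_zero_of_sdeg_lt h
  | succ i ih =>
    rw [pow_succ', mul_assoc]
    refine ⟨fun j hj => ?_, ?_⟩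
    · obtain ⟨j, rfl⟩ : ∃ j', j = j' + 1 := ⟨j - 1, by omega⟩
      rw [coeffs_t_mul_apply_succ, ih.1 j (by omega), ih.1 (j + 1) (by omega), map_zero,
        map_zero, add_zero]
    · rw [show i + 1 + sdeg h s = i + sdeg h s + 1 by omega, coeffs_t_mul_apply_succ, ih.2,
        ih.1 _ (by omega), map_zero, add_zero, Function.iterate_succ_apply']

lemma coeffs_mul (r s : R) (j : ℕ) :
    coeffs h (r * s) j = (coeffs h r).sum fun i k => k * coeffs h (t ^ i * s) j := by
  conv_lhs => rw [← ofCoeffs_coeffs h r, ofCoeffs, Finsupp.sum_mul]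
  change coeffsAddEquiv h _ j = _
  rw [map_finsuppSum, Finsupp.sum_apply]
  refine Finsupp.sum_congr fun i _ => ?_
  change coeffs h (ι _ * t ^ i * s) j = _
  rw [mul_assoc, coeffs_iota_mul, Finsupp.mapRange_apply]

lemma coeffs_mul_sdeg_add (r s : R) :
    (∀ j, sdeg h r + sdeg h s < j → coeffs h (r * s) j = 0) ∧
      coeffs h (r * s) (sdeg h r + sdeg h s) =
        coeffs h r (sdeg h r) * (S : K → K)^[sdeg h r] (coeffs h s (sdeg h s)) := by
  refine ⟨fun j hj => ?_, ?_⟩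
  · rw [coeffs_mul, Finsupp.sum]
    refine Finset.sum_eq_zero fun i hi => ?_
    rw [(coeffs_t_pow_mul h s i).1 j (by have := le_sdeg_of_mem_support h hi; omega), mul_zero]
  · rw [coeffs_mul, Finsupp.sum, Finset.sum_eq_single (sdeg h r)]
    · rw [(coeffs_t_pow_mul h s _).2]
    · intro i hi hne
      rw [(coeffs_t_pow_mul h s i).1 _ (by have := le_sdeg_of_mem_support h hi; omega),
        mul_zero]
    · intro hr
      rw [Finsupp.notMem_support_iff.mp hr, zero_mul]

lemma coeffs_mul_sdeg_add_ne_zero {r s : R} (hr : r ≠ 0) (hs : s ≠ 0) :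
    coeffs h (r * s) (sdeg h r + sdeg h s) ≠ 0 := by
  rw [(coeffs_mul_sdeg_add h r s).2]
  refine mul_ne_zero (coeffs_sdeg_ne_zero h hr) fun h0 => coeffs_sdeg_ne_zero h hs ?_
  exact S.injective.iterate _ (by rw [h0, iterate_map_zero])

include h in
lemma IsSkewPolyRing.one_ne_zero : (1 : R) ≠ 0 := fun h1 => by
  have h1' := coeffs_iota h 1
  rw [map_one, h1, (coeffs_eq_zero_iff h).mpr rfl] at h1'
  exact Finsupp.single_ne_zero.mpr _root_.one_ne_zero h1'.symm

include h in
lemma IsSkewPolyRing.mul_ne_zero {r s : R} (hr : r ≠ 0) (hs : s ≠ 0) : r * s ≠ 0 := by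
  rintro hrs
  apply coeffs_mul_sdeg_add_ne_zero h hr hs
  rw [hrs, (coeffs_eq_zero_iff h).mpr rfl, Finsupp.zero_apply]

lemma IsSkewPolyRing.sdeg_mul {r s : R} (hr : r ≠ 0) (hs : s ≠ 0) :
    sdeg h (r * s) = sdeg h r + sdeg h s :=
  sdeg_eq_of_coeffs_ne_zero h (coeffs_mul_sdeg_add_ne_zero h hr hs) (coeffs_mul_sdeg_add h r s).1

include h in
lemma t_sub_iota_ne_zero (b : K) : t - ι b ≠ 0 := by
  intro h0
  have := congrArg (· 1) (coeffs_t_sub_iota h b)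
  simp [h0, (coeffs_eq_zero_iff h).mpr rfl] at this

lemma sdeg_t_sub_iota (b : K) : sdeg h (t - ι b) = 1 :=
  sdeg_eq_of_coeffs_ne_zero h (by simp [coeffs_t_sub_iota])
    (fun j hj => by simp [coeffs_t_sub_iota, Finsupp.single_apply, hj.ne]; omega)

end Degree

section Evaluation

variable {K R : Type*} [DivisionRing K] [Ring R] {S : K →+* K} {D : K →+ K}
  {ι : K →+* R} {t : R} (h : IsSkewPolyRing S D ι t) (a : K)

def sdTAddHom (S : K →+* K) (D : K →+ K) (a : K) : K →+ K :=
  AddMonoidHom.mk' (sdT S D a) fun x y => by simp only [sdT, map_add, add_mul]; abel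

lemma sdT_mul_left (hD : IsSDerivation S D) (k x : K) :
    sdT S D a (k * x) = S k * sdT S D a x + D k * x := by
  simp only [sdT, map_mul, hD k x]
  noncomm_ring

/-- The operator `r(Tₐ)`, evaluated at `v`. -/
noncomputable def sdEval (r : R) (v : K) : K :=
  (coeffs h r).sum fun i k => k * (sdT S D a)^[i] v

lemma sdEval_add (r s : R) (v : K) : sdEval h a (r + s) v = sdEval h a r v + sdEval h a s v := by
  rw [sdEval, coeffs_add]
  exact Finsupp.sum_add_index' (fun _ => zero_mul _) (fun _ _ _ => add_mul _ _ _)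

lemma sdEval_sub (r s : R) (v : K) : sdEval h a (r - s) v = sdEval h a r v - sdEval h a s v :=
  eq_sub_of_add_eq (by rw [← sdEval_add, sub_add_cancel])

lemma sdEval_zero_left (v : K) : sdEval h a 0 v = 0 := by
  rw [sdEval, (coeffs_eq_zero_iff h).mpr rfl, Finsupp.sum_zero_index]

lemma sdEval_add_right (r : R) (x y : K) :
    sdEval h a r (x + y) = sdEval h a r x + sdEval h a r y := by
  rw [sdEval, sdEval, sdEval, ← Finsupp.sum_add]
  refine Finsupp.sum_congr fun i _ => ?_
  rw [← mul_add]
  exact congrArg _ (iterate_map_add (sdTAddHom S D a) i x y)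

lemma sdEval_zero_right (r : R) : sdEval h a r 0 = 0 :=
  Finset.sum_eq_zero fun i _ => by
    dsimp only
    rw [show (sdT S D a)^[i] 0 = 0 from iterate_map_zero (sdTAddHom S D a) i, mul_zero]

lemma sdEval_monomial (k : K) (i : ℕ) (v : K) :
    sdEval h a (ι k * t ^ i) v = k * (sdT S D a)^[i] v := by
  rw [sdEval, coeffs_monomial, Finsupp.sum_single_index (zero_mul _)]

lemma sdEval_iota (k v : K) : sdEval h a (ι k) v = k * v := by
  simpa using sdEval_monomial h a k 0 v

lemma sdEval_one (v : K) : sdEval h a 1 v = v := by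
  simpa using sdEval_iota h a 1 v

lemma sdEval_iota_mul (k : K) (r : R) (v : K) :
    sdEval h a (ι k * r) v = k * sdEval h a r v := by
  rw [sdEval, coeffs_iota_mul, Finsupp.sum_mapRange_index (fun _ => zero_mul _), sdEval,
    Finsupp.mul_sum]
  simp only [mul_assoc]

lemma sdEval_t_mul (hD : IsSDerivation S D) (r : R) (v : K) :
    sdEval h a (t * r) v = sdT S D a (sdEval h a r v) := by
  set c := coeffs h r
  calc sdEval h a (t * r) v
      = ((c.mapRange S S.map_zero).sum fun i k => k * (sdT S D a)^[i + 1] v)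
        + (c.mapRange D D.map_zero).sum fun i k => k * (sdT S D a)^[i] v := by
        rw [sdEval, coeffs_t_mul, Finsupp.sum_add_index' (fun _ => zero_mul _)
          (fun _ _ _ => add_mul _ _ _),
          Finsupp.sum_mapDomain_index (fun _ => zero_mul _) (fun _ _ _ => add_mul _ _ _)]
    _ = c.sum fun i k => S k * (sdT S D a)^[i + 1] v + D k * (sdT S D a)^[i] v := by
        rw [Finsupp.sum_mapRange_index (fun _ => zero_mul _),
          Finsupp.sum_mapRange_index (fun _ => zero_mul _), ← Finsupp.sum_add]
    _ = c.sum fun i k => sdT S D a (k * (sdT S D a)^[i] v) := by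
        refine Finsupp.sum_congr fun i _ => ?_
        rw [sdT_mul_left a hD, Function.iterate_succ_apply']
    _ = sdT S D a (sdEval h a r v) := (map_finsuppSum (sdTAddHom S D a) _ _).symm

lemma sdEval_mul (hD : IsSDerivation S D) (f g : R) (v : K) :
    sdEval h a (f * g) v = sdEval h a f (sdEval h a g v) := by
  induction f using induction_monomial h with
  | zero => rw [zero_mul, sdEval_zero_left, sdEval_zero_left]
  | add r s hr hs => rw [add_mul, sdEval_add, sdEval_add, hr, hs]
  | monomial k i =>
    rw [sdEval_monomial, mul_assoc, sdEval_iota_mul]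
    congr 1
    induction i with
    | zero => simp
    | succ i ih => rw [pow_succ', mul_assoc, sdEval_t_mul h a hD, ih, Function.iterate_succ_apply']

lemma sdEval_t_sub_iota (hD : IsSDerivation S D) (b v : K) :
    sdEval h a (t - ι b) v = sdT S D a v - b * v := by
  have ht : sdEval h a t v = sdT S D a v := by simpa [sdEval_one] using sdEval_t_mul h a hD 1 v
  rw [sdEval_sub, sdEval_iota, ht]

end Evaluation

section Kernel

variable {K R : Type*} [DivisionRing K] [Ring R] {S : K →+* K} {D : K →+ K}
  {ι : K →+* R} {t : R} (h : IsSkewPolyRing S D ι t)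

include h in
lemma exists_eq_mul_t_sub_iota_add (b : K) (r : R) :
    ∃ (g : R) (c : K), r = g * (t - ι b) + ι c := by
  induction r using induction_monomial h with
  | zero => exact ⟨0, 0, by simp⟩
  | add r s hr hs =>
    obtain ⟨g₁, c₁, rfl⟩ := hr
    obtain ⟨g₂, c₂, rfl⟩ := hs
    exact ⟨g₁ + g₂, c₁ + c₂, by rw [map_add]; noncomm_ring⟩
  | monomial k i =>
    suffices hpow : ∃ (g : R) (c : K), t ^ i = g * (t - ι b) + ι c by
      obtain ⟨g, c, hgc⟩ := hpow
      exact ⟨ι k * g, k * c, by rw [hgc, mul_add, ← mul_assoc, map_mul]⟩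
    induction i with
    | zero => exact ⟨0, 1, by simp⟩
    | succ i ih =>
      obtain ⟨g, c, hgc⟩ := ih
      refine ⟨t * g + ι (S c), S c * b + D c, ?_⟩
      rw [pow_succ', hgc, mul_add, h.1, map_add, map_mul]
      noncomm_ring

variable {a : K} (hD : IsSDerivation S D)
include hD

lemma sdEval_t_sub_sdConj_self {w : K} (hw : w ≠ 0) :
    sdEval h a (t - ι (sdConj S D a w)) w = 0 := by
  rw [sdEval_t_sub_iota h a hD, sdConj_mul_self a hw, sub_self]

lemma mem_span_t_sub_sdConj_iff {w : K} (hw : w ≠ 0) (r : R) :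
    r ∈ Ideal.span {t - ι (sdConj S D a w)} ↔ sdEval h a r w = 0 := by
  rw [Ideal.mem_span_singleton']
  constructor
  · rintro ⟨g, rfl⟩
    rw [sdEval_mul h a hD, sdEval_t_sub_sdConj_self h hD hw, sdEval_zero_right]
  · intro hr
    obtain ⟨g, c, rfl⟩ := exists_eq_mul_t_sub_iota_add h (sdConj S D a w) r
    rw [sdEval_add, sdEval_mul h a hD, sdEval_t_sub_sdConj_self h hD hw, sdEval_zero_right,
      sdEval_iota, zero_add] at hr
    rw [(mul_eq_zero.mp hr).resolve_right hw, map_zero, add_zero]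
    exact ⟨g, rfl⟩

lemma sdEval_mul_of_mem (r : R) {c : K} (hc : c ∈ sdCentralizer S D a) (x : K) :
    sdEval h a r (x * c) = sdEval h a r x * c := by
  have hsemi : Function.Semiconj (· * c) (sdT S D a) (sdT S D a) :=
    fun x => (sdT_mul_of_mem hD hc x).symm
  rw [sdEval, sdEval, Finsupp.sum_mul]
  refine Finsupp.sum_congr fun i _ => ?_
  rw [mul_assoc, ← hsemi.iterate_right i x]

lemma sdEval_sum_mul (r : R) {m : ℕ} (x c : Fin m → K) (hc : ∀ i, c i ∈ sdCentralizer S D a) :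
    sdEval h a r (∑ i, x i * c i) = ∑ i, sdEval h a r (x i) * c i :=
  (map_sum (AddMonoidHom.mk' (sdEval h a r) (sdEval_add_right h a r)) _ _).trans
    (Finset.sum_congr rfl fun i _ => sdEval_mul_of_mem h hD r (hc i) (x i))

/-- Peel off a right factor `t − a^{x j}` with `x j ≠ 0`; the kernel of `Tₐ − a^{x j}` is
`(x j)·C(a)`, which supplies the missing coefficient. -/
lemma exists_dependence_of_sdeg_lt {m : ℕ} {f : R} (hf : f ≠ 0) (hm : sdeg h f < m)
    (x : Fin m → K) (hx : ∀ i, sdEval h a f (x i) = 0) :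
    ∃ c : Fin m → K, (∀ i, c i ∈ sdCentralizer S D a) ∧ ∑ i, x i * c i = 0 ∧ c ≠ 0 := by
  induction m generalizing f with
  | zero => omega
  | succ m ih =>
    by_cases hx0 : ∀ i, x i = 0
    · exact ⟨1, fun _ => one_mem_sdCentralizer hD, by simp [hx0], one_ne_zero⟩
    obtain ⟨j, hj⟩ := not_forall.mp hx0
    obtain ⟨g, rfl⟩ :=
      Ideal.mem_span_singleton'.mp ((mem_span_t_sub_sdConj_iff h hD hj f).mpr (hx j))
    have hg : g ≠ 0 := by rintro rfl; exact hf (zero_mul _)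
    rw [h.sdeg_mul hg (t_sub_iota_ne_zero h _), sdeg_t_sub_iota] at hm
    set y : Fin m → K := fun i => x (j.succAbove i)
    obtain ⟨c, hcC, hyc, hc⟩ :=
      ih hg (by omega) (fun i => sdEval h a (t - ι (sdConj S D a (x j))) (y i))
        fun i => by rw [← sdEval_mul h a hD]; exact hx _
    have hz : sdT S D a (∑ i, y i * c i) = sdConj S D a (x j) * ∑ i, y i * c i := by
      rw [← sub_eq_zero, ← sdEval_t_sub_iota h a hD, sdEval_sum_mul h hD _ _ _ hcC]
      exact hyc
    obtain ⟨e, heC, he⟩ := exists_mem_sdCentralizer_of_sdT_eq hD hj hz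
    refine ⟨j.insertNth (-e) c, fun i => ?_, ?_, fun h0 => hc (funext fun i => ?_)⟩
    · cases i using j.succAboveCases <;>
        simp [neg_mem_sdCentralizer heC, hcC]
    · rw [Fin.sum_univ_succAbove _ j]
      simp [y, ← he]
    · simpa using congrFun h0 (j.succAbove i)

/-- If `q(Tₐ)` kills `s` but not `w`, then `((t − a^{q(Tₐ)w})·q)(Tₐ)` kills `insert w s`. -/
lemma exists_sdEval_eq_zero_of_finset [DecidableEq K] (s : Finset K) :
    ∃ q : R, q ≠ 0 ∧ sdeg h q ≤ s.card ∧ ∀ w ∈ s, sdEval h a q w = 0 := by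
  induction s using Finset.induction_on with
  | empty => exact ⟨1, h.one_ne_zero, by
      rw [sdeg, ← map_one ι, coeffs_iota]; simp, by simp⟩
  | insert w s hws ih =>
    obtain ⟨q, hq, hdeg, hs⟩ := ih
    rw [Finset.card_insert_of_notMem hws]
    by_cases hqw : sdEval h a q w = 0
    · exact ⟨q, hq, by omega, Finset.forall_mem_insert _ _ _ |>.mpr ⟨hqw, hs⟩⟩
    refine ⟨(t - ι (sdConj S D a (sdEval h a q w))) * q,
      h.mul_ne_zero (t_sub_iota_ne_zero h _) hq, ?_, ?_⟩
    · rw [h.sdeg_mul (t_sub_iota_ne_zero h _) hq, sdeg_t_sub_iota]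
      omega
    · simp only [Finset.forall_mem_insert, sdEval_mul h a hD]
      exact ⟨sdEval_t_sub_sdConj_self h hD hqw, fun w' hw' => by
        rw [hs w' hw', sdEval_zero_right]⟩

lemma ne_zero_and_sdeg_le_of_span_eq {n : ℕ} {u : Fin n → K} {p : R}
    (hp : ∀ q, q ∈ Ideal.span {p} ↔ ∀ i, sdEval h a q (u i) = 0) : p ≠ 0 ∧ sdeg h p ≤ n := by
  classical
  obtain ⟨q, hq, hqdeg, hqu⟩ := exists_sdEval_eq_zero_of_finset h hD (Finset.univ.image u)
  obtain ⟨g, rfl⟩ := Ideal.mem_span_singleton'.mp <|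
    (hp q).mpr fun i => hqu _ (Finset.mem_image_of_mem u (Finset.mem_univ i))
  have hqdeg' := (Finset.card_image_le.trans_eq (Finset.card_fin n)).trans' hqdeg
  rw [h.sdeg_mul (left_ne_zero_of_mul hq) (right_ne_zero_of_mul hq)] at hqdeg'
  exact ⟨right_ne_zero_of_mul hq, by omega⟩

end Kernel

theorem ker_wedderburn_operator_general {K R : Type*} [DivisionRing K] [Ring R]
    (S : K →+* K) (D : K →+ K)
    (hD : ∀ a b : K, D (a * b) = S a * D b + D a * b)
    (ι : K →+* R) (t : R) (h : IsSkewPolyRing S D ι t)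
    (a : K) (n : ℕ) (u : Fin n → K)
    (hind : ∀ c : Fin n → K, (∀ i, c i ∈ sdCentralizer S D a) →
      ∑ i, u i * c i = 0 → ∀ i, c i = 0)
    (p : R)
    (hps : Ideal.span {p} = ⨅ i : Fin n, Ideal.span {t - ι (sdConj S D a (u i))}) :
    ∀ v : K, ((coeffs h p).sum fun i k => k * (sdT S D a)^[i] v) = 0 ↔
      ∃ c : Fin n → K, (∀ i, c i ∈ sdCentralizer S D a) ∧ v = ∑ i, u i * c i := by
  have hu := SDIndependent.ne_zero hD hind
  have hspan (q : R) : q ∈ Ideal.span {p} ↔ ∀ i, sdEval h a q (u i) = 0 := by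
    rw [hps, Ideal.mem_iInf]
    exact forall_congr' fun i => mem_span_t_sub_sdConj_iff h hD (hu i) q
  have hpu := (hspan p).mp (Ideal.mem_span_singleton_self p)
  obtain ⟨hp, hpdeg⟩ := ne_zero_and_sdeg_le_of_span_eq h hD hspan
  intro v
  change sdEval h a p v = 0 ↔ _
  constructor
  · intro hv
    obtain ⟨c, hcC, hsum, hc⟩ := exists_dependence_of_sdeg_lt h hD hp (Nat.lt_succ_of_le hpdeg)
      (Fin.cons v u) (Fin.cases hv hpu)
    exact SDIndependent.exists_eq_sum_of_cons_dependence hD hind hcC hsum hc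
  · rintro ⟨c, hcC, rfl⟩
    simp [sdEval_sum_mul h hD p u c hcC, hpu]

/-- Kernel of the Wedderburn polynomial operator: if `u₁,…,uₙ` are right linearly
independent over `C(a)` and `pₙ` is the monic llcm of the `t − a^{uᵢ}`, then
`ker pₙ(Tₐ) = u₁C(a) + ⋯ + uₙC(a)`. -/
theorem ker_wedderburn_operator {K R : Type*} [DivisionRing K] [Ring R]
    (S : K →+* K) (D : K →+ K)
    (hD : ∀ a b : K, D (a * b) = S a * D b + D a * b)
    (ι : K →+* R) (t : R) (h : IsSkewPolyRing S D ι t)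
    (a : K) (n : ℕ) (u : Fin n → K) (hu : ∀ i, u i ≠ 0)
    (hind : ∀ c : Fin n → K, (∀ i, c i ∈ sdCentralizer S D a) →
      ∑ i, u i * c i = 0 → ∀ i, c i = 0)
    (p : R) (hpm : SMonic h p)
    (hps : Ideal.span {p} = ⨅ i : Fin n, Ideal.span {t - ι (sdConj S D a (u i))}) :
    ∀ v : K, ((coeffs h p).sum fun i k => k * (sdT S D a)^[i] v) = 0 ↔
      ∃ c : Fin n → K, (∀ i, c i ∈ sdCentralizer S D a) ∧ v = ∑ i, u i * c i :=
  ker_wedderburn_operator_general S D hD ι t h a n u hind p hps
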